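/- arXiv:1604.06968 — 3 statements merged into one kernel-verified Lean document; each statement's English description precedes it below -/
import Mathlib

section
/- Let X be a real-valued random variable with E[(X - E X)^2] = σ² and E[(X - E X)^4] ≤ C₄ · (E[(X - E X)^2])² for some C₄ > 0. Let ε ≤ 1/2 and let A be any event with P(A) = 1 - ε. Then |E[X | A] - E[X]| ≤ (8 C₄ ε³)^{1/4} · σ. -/
/-!
Center `X` at its mean and split the expectation along `A` and `Aᶜ`: with `p = 1 - ε`,
`u = E[X - EX | A]` and `v = E[X - EX | Aᶜ]` one has `p u + ε v = 0`, and Jensen's inequality for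
`x ↦ x⁴` under the two conditional laws gives `p u⁴ + ε v⁴ ≤ E[(X - EX)⁴] ≤ C₄ σ⁴`. Eliminating
`v = -p u / ε` yields `p (p³ + ε³) u⁴ ≤ ε³ C₄ σ⁴`, and `p (p³ + ε³) ≥ 1/8` as soon as `ε ≤ 1/2`.
-/

open MeasureTheory ProbabilityTheory

lemma pow_integral_le_integral_pow_of_even {Ω : Type*} [MeasurableSpace Ω] {μ : Measure Ω}
    [IsProbabilityMeasure μ] {f : Ω → ℝ} {n : ℕ} (hn : Even n) (hf : Integrable f μ)
    (hfn : Integrable (fun x => f x ^ n) μ) :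
    (∫ x, f x ∂μ) ^ n ≤ ∫ x, f x ^ n ∂μ :=
  (hn.convexOn_pow (𝕜 := ℝ)).map_integral_le (continuous_pow n).continuousOn isClosed_univ
    (by simp) hf hfn

namespace ProbabilityTheory

variable {Ω E : Type*} [MeasurableSpace Ω] [NormedAddCommGroup E] {μ : Measure Ω} {s : Set Ω}

lemma measureReal_smul_integral_cond [NormedSpace ℝ E] [IsFiniteMeasure μ] (s : Set Ω)
    (f : Ω → E) :
    μ.real s • ∫ x, f x ∂μ[|s] = ∫ x in s, f x ∂μ := by
  rcases eq_or_ne (μ s) 0 with hs | hs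
  · simp [Measure.restrict_eq_zero.mpr hs, measureReal_def, hs]
  · rw [cond, integral_smul_measure, smul_smul, measureReal_def, ENNReal.toReal_inv,
      mul_inv_cancel₀ (ENNReal.toReal_ne_zero.mpr ⟨hs, measure_ne_top μ s⟩), one_smul]

lemma integral_cond_add_integral_cond_compl [NormedSpace ℝ E] [IsFiniteMeasure μ]
    (hs : MeasurableSet s) {f : Ω → E} (hf : Integrable f μ) :
    μ.real s • ∫ x, f x ∂μ[|s] + μ.real sᶜ • ∫ x, f x ∂μ[|sᶜ] = ∫ x, f x ∂μ := by
  rw [measureReal_smul_integral_cond, measureReal_smul_integral_cond, integral_add_compl hs hf]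

lemma _root_.MeasureTheory.Integrable.cond {f : Ω → E} (hf : Integrable f μ) (hs : μ s ≠ 0) :
    Integrable f μ[|s] :=
  hf.restrict.smul_measure (ENNReal.inv_ne_top.mpr hs)

lemma measureReal_mul_pow_integral_cond_add_compl_le [IsFiniteMeasure μ] {f : Ω → ℝ} {n : ℕ}
    (hn : Even n) (hs : MeasurableSet s) (hs0 : μ s ≠ 0) (hsc0 : μ sᶜ ≠ 0) (hf : Integrable f μ)
    (hfn : Integrable (fun x => f x ^ n) μ) :
    μ.real s * (∫ x, f x ∂μ[|s]) ^ n + μ.real sᶜ * (∫ x, f x ∂μ[|sᶜ]) ^ n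
      ≤ ∫ x, f x ^ n ∂μ := by
  have := cond_isProbabilityMeasure hs0
  have := cond_isProbabilityMeasure hsc0
  rw [← integral_cond_add_integral_cond_compl hs hfn, smul_eq_mul, smul_eq_mul]
  gcongr
  · exact pow_integral_le_integral_pow_of_even hn (hf.cond hs0) (hfn.cond hs0)
  · exact pow_integral_le_integral_pow_of_even hn (hf.cond hsc0) (hfn.cond hsc0)

end ProbabilityTheory

lemma pow_four_le_of_weighted_mean_eq_zero {p q u v M : ℝ} (hq : 0 < q) (hq2 : q ≤ 1 / 2)
    (hpq : p + q = 1) (hmean : p * u + q * v = 0) (hM : p * u ^ 4 + q * v ^ 4 ≤ M) :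
    u ^ 4 ≤ 8 * q ^ 3 * M := by
  have hv : q ^ 4 * v ^ 4 = p ^ 4 * u ^ 4 := by
    rw [← mul_pow, ← mul_pow, show q * v = -(p * u) by linarith, Even.neg_pow (by decide)]
  have hweight : 1 ≤ 8 * p * (p ^ 3 + q ^ 3) := by
    obtain rfl : p = 1 - q := by linarith
    nlinarith [sq_nonneg (2 * q - 1), sq_nonneg (3 * q - 2), hq.le]
  have hu : p * (p ^ 3 + q ^ 3) * u ^ 4 ≤ q ^ 3 * M := by
    nlinarith [mul_le_mul_of_nonneg_left hM (pow_pos hq 3).le]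
  nlinarith [pow_nonneg (sq_nonneg u) 2]

lemma abs_le_rpow_quarter_mul_of_pow_four_le {u c σ : ℝ} (hc : 0 ≤ c) (hσ : 0 ≤ σ)
    (h : u ^ 4 ≤ c * σ ^ 4) : |u| ≤ c ^ ((1 : ℝ) / 4) * σ := by
  have hroot : (c ^ ((1 : ℝ) / 4) * σ) ^ 4 = c * σ ^ 4 := by
    rw [mul_pow, one_div, show (4 : ℝ) = (4 : ℕ) by norm_num,
      Real.rpow_inv_natCast_pow hc four_ne_zero]
  rw [← pow_le_pow_iff_left₀ (abs_nonneg u) (by positivity) four_ne_zero, pow_abs,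
    abs_of_nonneg (by positivity), hroot]
  exact h

theorem mean_shift_general {Ω : Type*} [MeasurableSpace Ω] (μ : Measure Ω) [IsProbabilityMeasure μ]
    (X : Ω → ℝ) (σ C₄ ε : ℝ) (hC : 0 < C₄) (hσ : 0 ≤ σ)
    (hX1 : Integrable X μ)
    (hX4 : Integrable (fun ω => (X ω - ∫ ω', X ω' ∂μ)^4) μ)
    (hvar : ∫ ω, (X ω - ∫ ω', X ω' ∂μ)^2 ∂μ = σ^2)
    (h4 : ∫ ω, (X ω - ∫ ω', X ω' ∂μ)^4 ∂μ
        ≤ C₄ * (∫ ω, (X ω - ∫ ω', X ω' ∂μ)^2 ∂μ)^2)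
    (A : Set Ω) (hA : MeasurableSet A) (hε : 0 < ε) (hε2 : ε ≤ 1/2)
    (hPA : μ A = ENNReal.ofReal (1 - ε)) :
    |(∫ ω, X ω ∂(μ[|A])) - ∫ ω, X ω ∂μ| ≤ (8 * C₄ * ε^3) ^ ((1:ℝ)/4) * σ := by
  set m := ∫ ω', X ω' ∂μ
  have hPA' : μ.real A = 1 - ε := by
    rw [measureReal_def, hPA, ENNReal.toReal_ofReal (by linarith)]
  have hPAc : μ.real Aᶜ = ε := by rw [probReal_compl_eq_one_sub hA, hPA']; ring
  have hA0 : μ A ≠ 0 := (measureReal_ne_zero_iff).mp (by rw [hPA']; linarith)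
  have hAc0 : μ Aᶜ ≠ 0 := (measureReal_ne_zero_iff).mp (by rw [hPAc]; linarith)
  have := cond_isProbabilityMeasure hA0
  have hY : Integrable (fun ω => X ω - m) μ := hX1.sub (integrable_const m)
  have hcond : ∫ ω, X ω ∂μ[|A] - m = ∫ ω, (X ω - m) ∂μ[|A] := by
    simp [integral_sub (hX1.cond hA0) (integrable_const m)]
  have hmean : (1 - ε) * ∫ ω, (X ω - m) ∂μ[|A] + ε * ∫ ω, (X ω - m) ∂μ[|Aᶜ] = 0 := by
    rw [← hPA', ← hPAc, ← smul_eq_mul, ← smul_eq_mul, integral_cond_add_integral_cond_compl hA hY]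
    simp [integral_sub hX1 (integrable_const m), m]
  have hfourth : (1 - ε) * (∫ ω, (X ω - m) ∂μ[|A]) ^ 4 + ε * (∫ ω, (X ω - m) ∂μ[|Aᶜ]) ^ 4
      ≤ C₄ * σ ^ 4 := by
    rw [← hPA', ← hPAc]
    refine (measureReal_mul_pow_integral_cond_add_compl_le (by decide) hA hA0 hAc0 hY hX4).trans ?_
    rwa [hvar, ← pow_mul] at h4
  rw [hcond]
  refine abs_le_rpow_quarter_mul_of_pow_four_le (by positivity) hσ ?_
  have := pow_four_le_of_weighted_mean_eq_zero hε hε2 (by ring) hmean hfourth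
  linarith

/-- Let X be a real random variable with variance σ² and fourth central
moment bounded by C₄ times the square of the variance. Let A be an event with
P(A) = 1 - ε, 0 < ε ≤ 1/2. Then |E[X|A] - E[X]| ≤ (8 C₄ ε³)^{1/4} σ. -/
theorem mean_shift {Ω : Type*} [MeasurableSpace Ω] (μ : Measure Ω) [IsProbabilityMeasure μ]
    (X : Ω → ℝ) (σ C₄ ε : ℝ) (hC : 0 < C₄) (hσ : 0 ≤ σ)
    (hX1 : Integrable X μ)
    (hX2 : Integrable (fun ω => (X ω - ∫ ω', X ω' ∂μ)^2) μ)
    (hX4 : Integrable (fun ω => (X ω - ∫ ω', X ω' ∂μ)^4) μ)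
    (hvar : ∫ ω, (X ω - ∫ ω', X ω' ∂μ)^2 ∂μ = σ^2)
    (h4 : ∫ ω, (X ω - ∫ ω', X ω' ∂μ)^4 ∂μ
        ≤ C₄ * (∫ ω, (X ω - ∫ ω', X ω' ∂μ)^2 ∂μ)^2)
    (A : Set Ω) (hA : MeasurableSet A) (hε : 0 < ε) (hε2 : ε ≤ 1/2)
    (hPA : μ A = ENNReal.ofReal (1 - ε)) :
    |(∫ ω, X ω ∂(μ[|A])) - ∫ ω, X ω ∂μ| ≤ (8 * C₄ * ε^3) ^ ((1:ℝ)/4) * σ :=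
  mean_shift_general μ X σ C₄ ε hC hσ hX1 hX4 hvar h4 A hA hε hε2 hPA
end

section
/- Let X be a real random variable with mean μ, variance σ², and E[(X-μ)⁴] ≤ C₄ σ⁴. Then for any event A with P(A) = 1 - ε, 0 < ε ≤ 1/2: -√(C₄ ε) σ² ≤ E[(X-μ)² | A] - σ² ≤ 2ε σ². -/
/-!
Write `Y = (X - m)²`, so that `σ² = E[Y; A] + E[Y; Aᶜ]` and `E[Y | A] = E[Y; A] / (1 - ε)`.
The upper bound follows from `E[Y; A] ≤ σ²` and `(1 - ε)⁻¹ ≤ 1 + 2ε`. For the lower bound,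
`E[Y | A] ≥ E[Y; A] = σ² - E[Y; Aᶜ]`, and Cauchy–Schwarz bounds the tail:
`E[Y; Aᶜ] ≤ √(P(Aᶜ) E[Y²]) ≤ √(ε C₄ σ⁴)`.
-/

open MeasureTheory ProbabilityTheory

section CauchySchwarz

variable {α : Type*} [MeasurableSpace α] {ν : Measure α} [IsFiniteMeasure ν] {f : α → ℝ}

theorem sq_integral_le_measureReal_univ_mul_integral_sq (hf : MemLp f 2 ν) :
    (∫ x, f x ∂ν) ^ 2 ≤ ν.real Set.univ * ∫ x, f x ^ 2 ∂ν := by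
  have hf1 : Integrable f ν := hf.integrable one_le_two
  have hf2 : Integrable (fun x => f x ^ 2) ν := hf.integrable_sq
  -- `∫ (t - f)² ≥ 0` for every `t`, so this quadratic in `t` has nonpositive discriminant.
  have hquad : ∀ t : ℝ,
      0 ≤ ν.real Set.univ * (t * t) + (-2 * ∫ x, f x ∂ν) * t + ∫ x, f x ^ 2 ∂ν := by
    intro t
    have hexpand : ∫ x, (t - f x) ^ 2 ∂ν
        = ν.real Set.univ * (t * t) + (-2 * ∫ x, f x ∂ν) * t + ∫ x, f x ^ 2 ∂ν := by
      have hsq : (fun x => (t - f x) ^ 2) = fun x => (t * t - 2 * t * f x) + f x ^ 2 := by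
        ext x; ring
      rw [hsq, integral_add (f := fun x => t * t - 2 * t * f x) (by fun_prop) hf2,
        integral_sub (integrable_const _) (hf1.const_mul _), integral_const, integral_const_mul,
        smul_eq_mul]
      ring
    exact hexpand ▸ integral_nonneg fun x => sq_nonneg _
  have hdiscrim := discrim_le_zero hquad
  rw [discrim] at hdiscrim
  nlinarith

theorem setIntegral_le_sqrt_measureReal_mul_integral_sq (hf : MemLp f 2 ν) (s : Set α) :
    ∫ x in s, f x ∂ν ≤ √(ν.real s * ∫ x, f x ^ 2 ∂ν) := by
  refine le_abs_self _ |>.trans <| Real.abs_le_sqrt ?_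
  calc (∫ x in s, f x ∂ν) ^ 2 ≤ ν.real s * ∫ x in s, f x ^ 2 ∂ν := by
        simpa [measureReal_restrict_apply_univ] using
          sq_integral_le_measureReal_univ_mul_integral_sq (hf.restrict s)
    _ ≤ ν.real s * ∫ x, f x ^ 2 ∂ν := mul_le_mul_of_nonneg_left
        (setIntegral_le_integral hf.integrable_sq (.of_forall fun x => sq_nonneg _))
        measureReal_nonneg

end CauchySchwarz

theorem integral_cond {Ω E : Type*} [MeasurableSpace Ω] [NormedAddCommGroup E] [NormedSpace ℝ E]
    (μ : Measure Ω) (s : Set Ω) (f : Ω → E) :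
    ∫ x, f x ∂μ[|s] = (μ.real s)⁻¹ • ∫ x in s, f x ∂μ := by
  rw [ProbabilityTheory.cond, integral_smul_measure, ENNReal.toReal_inv, measureReal_def]

theorem inv_one_sub_le_one_add_two_mul {ε : ℝ} (hε0 : 0 ≤ ε) (hε1 : ε ≤ 1 / 2) :
    (1 - ε)⁻¹ ≤ 1 + 2 * ε := by
  rw [inv_le_iff_one_le_mul₀ (by linarith)]
  nlinarith

theorem conditional_second_moment_general {Ω : Type*} [MeasurableSpace Ω] (μ : Measure Ω)
    [IsProbabilityMeasure μ]
    (X : Ω → ℝ) (m σ C₄ ε : ℝ)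
    (hX2 : Integrable (fun ω => (X ω - m)^2) μ)
    (hX4 : Integrable (fun ω => (X ω - m)^4) μ)
    (hvar : ∫ ω, (X ω - m)^2 ∂μ = σ^2)
    (h4 : ∫ ω, (X ω - m)^4 ∂μ ≤ C₄ * σ^4)
    (A : Set Ω) (hA : MeasurableSet A) (hε0 : 0 < ε) (hε1 : ε ≤ 1/2)
    (hPA : μ A = ENNReal.ofReal (1 - ε)) :
    -(Real.sqrt (C₄ * ε)) * σ^2 ≤ (∫ ω, (X ω - m)^2 ∂(μ[|A])) - σ^2 ∧
      (∫ ω, (X ω - m)^2 ∂(μ[|A])) - σ^2 ≤ 2 * ε * σ^2 := by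
  have hPA' : μ.real A = 1 - ε := by
    rw [measureReal_def, hPA, ENNReal.toReal_ofReal (by linarith)]
  have hPAc : μ.real Aᶜ = ε := by rw [probReal_compl_eq_one_sub hA, hPA']; ring
  have hY2 : MemLp (fun ω => (X ω - m)^2) 2 μ := by
    refine (memLp_two_iff_integrable_sq hX2.1).2 ?_
    simpa only [← pow_mul] using hX4
  set S := ∫ ω in A, (X ω - m)^2 ∂μ
  set T := ∫ ω in Aᶜ, (X ω - m)^2 ∂μ
  have hsplit : S + T = σ^2 := by rw [integral_add_compl hA hX2, hvar]
  have hS : 0 ≤ S := setIntegral_nonneg hA fun ω _ => sq_nonneg _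
  have hT : 0 ≤ T := setIntegral_nonneg hA.compl fun ω _ => sq_nonneg _
  have hcond : ∫ ω, (X ω - m)^2 ∂(μ[|A]) = (1 - ε)⁻¹ * S := by
    rw [integral_cond, hPA', smul_eq_mul]
  have htail : T ≤ √(C₄ * ε) * σ^2 := calc
    T ≤ √(ε * ∫ ω, ((X ω - m)^2)^2 ∂μ) :=
        hPAc ▸ setIntegral_le_sqrt_measureReal_mul_integral_sq hY2 Aᶜ
    _ ≤ √(ε * (C₄ * σ^4)) := by
        simp only [← pow_mul]
        gcongr
    _ = √(C₄ * ε) * σ^2 := by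
        rw [show ε * (C₄ * σ^4) = C₄ * ε * (σ^2)^2 by ring, Real.sqrt_mul' _ (by positivity),
          Real.sqrt_sq (by positivity)]
  have hinv : 1 ≤ (1 - ε)⁻¹ := one_le_inv₀ (by linarith) |>.2 (by linarith)
  rw [hcond]
  constructor
  · calc -√(C₄ * ε) * σ^2 ≤ S - σ^2 := by linarith
      _ ≤ (1 - ε)⁻¹ * S - σ^2 := by gcongr; exact le_mul_of_one_le_left hS hinv
  · calc (1 - ε)⁻¹ * S - σ^2 ≤ (1 + 2 * ε) * σ^2 - σ^2 := by
          gcongr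
          · exact inv_one_sub_le_one_add_two_mul hε0.le hε1
          · linarith
      _ = 2 * ε * σ^2 := by ring

/-- If E[X] = μ, Var X = σ², E[(X-μ)⁴] ≤ C₄ σ⁴, and A is an event with
P(A) = 1 - ε, 0 < ε ≤ 1/2, then -√(C₄ ε) σ² ≤ E[(X-μ)² | A] - σ² ≤ 2ε σ². -/
theorem conditional_second_moment {Ω : Type*} [MeasurableSpace Ω] (μ : Measure Ω)
    [IsProbabilityMeasure μ]
    (X : Ω → ℝ) (m σ C₄ ε : ℝ) (hC : 0 < C₄) (hσ : 0 ≤ σ)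
    (hX1 : Integrable X μ)
    (hX2 : Integrable (fun ω => (X ω - m)^2) μ)
    (hX4 : Integrable (fun ω => (X ω - m)^4) μ)
    (hm : ∫ ω, X ω ∂μ = m)
    (hvar : ∫ ω, (X ω - m)^2 ∂μ = σ^2)
    (h4 : ∫ ω, (X ω - m)^4 ∂μ ≤ C₄ * σ^4)
    (A : Set Ω) (hA : MeasurableSet A) (hε0 : 0 < ε) (hε1 : ε ≤ 1/2)
    (hPA : μ A = ENNReal.ofReal (1 - ε)) :
    -(Real.sqrt (C₄ * ε)) * σ^2 ≤ (∫ ω, (X ω - m)^2 ∂(μ[|A])) - σ^2 ∧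
      (∫ ω, (X ω - m)^2 ∂(μ[|A])) - σ^2 ≤ 2 * ε * σ^2 :=
  conditional_second_moment_general μ X m σ C₄ ε hX2 hX4 hvar h4 A hA hε0 hε1 hPA
end

section
/- Fix σ > 0 and η ∈ (0, 1/4]. Let D₁ be the distribution on ℝ uniform on {-σ, σ}, and D₂ the distribution supported on {-σ, σ, σ/η^{1/4}} with probabilities (1-η)/2, (1-η)/2, η. Then: (a) both D₁ and D₂ have bounded fourth moments with constant C₄ = 8, i.e., E[(X - E X)⁴] ≤ 8 (Var X)²; (b) D₂ = (1-η) D₁ + η Q for a probability distribution Q (the point mass at σ/η^{1/4}); (c) the means of D₁ and D₂ differ by exactly η^{3/4} σ. -/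
open MeasureTheory
set_option maxHeartbeats 1000000

lemma integrable_dirac'' (f : ℝ → ℝ) (hf : Measurable f) (a : ℝ) :
    Integrable f (Measure.dirac a) := by
  refine ⟨hf.aestronglyMeasurable, ?_⟩
  rw [HasFiniteIntegral, lintegral_dirac]
  exact ENNReal.coe_lt_top

lemma intg2 (f : ℝ → ℝ) (hf : Measurable f) (a b p q : ℝ) (hp : 0 ≤ p) (hq : 0 ≤ q) :
    ∫ x, f x ∂(ENNReal.ofReal p • Measure.dirac a + ENNReal.ofReal q • Measure.dirac b)
      = p * f a + q * f b := by
  have h1 : Integrable f (ENNReal.ofReal p • Measure.dirac a) :=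
    (integrable_dirac'' f hf a).smul_measure ENNReal.ofReal_ne_top
  have h2 : Integrable f (ENNReal.ofReal q • Measure.dirac b) :=
    (integrable_dirac'' f hf b).smul_measure ENNReal.ofReal_ne_top
  rw [integral_add_measure h1 h2, integral_smul_measure, integral_smul_measure,
    integral_dirac, integral_dirac, ENNReal.toReal_ofReal hp, ENNReal.toReal_ofReal hq]
  simp

lemma intg3 (f : ℝ → ℝ) (hf : Measurable f) (a b c p q r : ℝ)
    (hp : 0 ≤ p) (hq : 0 ≤ q) (hr : 0 ≤ r) :
    ∫ x, f x ∂(ENNReal.ofReal p • Measure.dirac a + ENNReal.ofReal q • Measure.dirac b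
      + ENNReal.ofReal r • Measure.dirac c) = p * f a + q * f b + r * f c := by
  have h1 : Integrable f (ENNReal.ofReal p • Measure.dirac a) :=
    (integrable_dirac'' f hf a).smul_measure ENNReal.ofReal_ne_top
  have h2 : Integrable f (ENNReal.ofReal q • Measure.dirac b) :=
    (integrable_dirac'' f hf b).smul_measure ENNReal.ofReal_ne_top
  have h3 : Integrable f (ENNReal.ofReal r • Measure.dirac c) :=
    (integrable_dirac'' f hf c).smul_measure ENNReal.ofReal_ne_top
  rw [integral_add_measure (h1.add_measure h2) h3, integral_add_measure h1 h2,
    integral_smul_measure, integral_smul_measure, integral_smul_measure,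
    integral_dirac, integral_dirac, integral_dirac,
    ENNReal.toReal_ofReal hp, ENNReal.toReal_ofReal hq, ENNReal.toReal_ofReal hr]
  simp

/-- For σ > 0 and η ∈ (0,1/4], the two-point distribution D₁ uniform on
{-σ,σ} and the distribution D₂ on {-σ,σ,σ/η^{1/4}} with weights (1-η)/2, (1-η)/2, η
both have fourth central moments bounded by 8·(variance)², D₂ is an η-contamination
of D₁ (D₂ = (1-η)D₁ + η·δ_{σ/η^{1/4}}), and their means differ by exactly η^{3/4}σ. -/
theorem lower_bound_construction (σ η : ℝ) (hσ : 0 < σ) (hη : 0 < η) (hη4 : η ≤ 1/4) :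
    let D₁ : Measure ℝ := (ENNReal.ofReal (1/2)) • Measure.dirac (-σ)
        + (ENNReal.ofReal (1/2)) • Measure.dirac σ
    let D₂ : Measure ℝ := (ENNReal.ofReal ((1-η)/2)) • Measure.dirac (-σ)
        + (ENNReal.ofReal ((1-η)/2)) • Measure.dirac σ
        + (ENNReal.ofReal η) • Measure.dirac (σ / η ^ ((1:ℝ)/4))
    (∫ x, (x - ∫ y, y ∂D₁)^4 ∂D₁ ≤ 8 * (∫ x, (x - ∫ y, y ∂D₁)^2 ∂D₁)^2) ∧
      (∫ x, (x - ∫ y, y ∂D₂)^4 ∂D₂ ≤ 8 * (∫ x, (x - ∫ y, y ∂D₂)^2 ∂D₂)^2) ∧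
      D₂ = (ENNReal.ofReal (1-η)) • D₁
          + (ENNReal.ofReal η) • Measure.dirac (σ / η ^ ((1:ℝ)/4)) ∧
      |(∫ x, x ∂D₂) - ∫ x, x ∂D₁| = η ^ ((3:ℝ)/4) * σ := by
  intro D₁ D₂
  simp only [D₁, D₂]
  set t := η ^ ((1:ℝ)/4) with htdef
  have ht : 0 < t := Real.rpow_pos_of_pos hη _
  have ht4 : t ^ 4 = η := by
    rw [htdef, ← Real.rpow_natCast (η ^ ((1:ℝ)/4)) 4, ← Real.rpow_mul hη.le]
    norm_num
  have h34 : η ^ ((3:ℝ)/4) = t ^ 3 := by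
    rw [htdef, ← Real.rpow_natCast (η ^ ((1:ℝ)/4)) 3, ← Real.rpow_mul hη.le]
    norm_num
  have hη1 : (0:ℝ) ≤ (1 - η)/2 := by linarith
  have ht2 : t ^ 2 ≤ 1/2 := by nlinarith [sq_nonneg t, ht4]
  rw [h34, ← ht4]
  -- mean of D₁
  have hw : (0:ℝ) ≤ (1 - t^4)/2 := by rw [ht4]; exact hη1
  have hw' : (0:ℝ) ≤ t^4 := by positivity
  have hm1 : (∫ y, y ∂((ENNReal.ofReal (1/2)) • Measure.dirac (-σ)
      + (ENNReal.ofReal (1/2)) • Measure.dirac σ)) = 0 := by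
    have h := intg2 (fun y => y) measurable_id (-σ) σ (1/2) (1/2) (by norm_num) (by norm_num)
    rw [h]; ring
  have hm2 : (∫ y, y ∂((ENNReal.ofReal ((1-t^4)/2)) • Measure.dirac (-σ)
      + (ENNReal.ofReal ((1-t^4)/2)) • Measure.dirac σ
      + (ENNReal.ofReal (t^4)) • Measure.dirac (σ / t))) = t^3 * σ := by
    have h := intg3 (fun y => y) measurable_id (-σ) σ (σ/t) ((1-t^4)/2) ((1-t^4)/2) (t^4)
      hw hw hw'
    rw [h]; field_simp; ring
  refine ⟨?_, ?_, ?_, ?_⟩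
  · rw [hm1]
    have h4 := intg2 (fun x => (x - 0)^4) (by fun_prop) (-σ) σ (1/2) (1/2)
      (by norm_num) (by norm_num)
    have h2 := intg2 (fun x => (x - 0)^2) (by fun_prop) (-σ) σ (1/2) (1/2)
      (by norm_num) (by norm_num)
    rw [h4, h2]
    nlinarith [pow_pos hσ 4, sq_nonneg σ]
  · rw [hm2]
    have h4 := intg3 (fun x => (x - t^3*σ)^4) (by fun_prop) (-σ) σ (σ/t)
      ((1-t^4)/2) ((1-t^4)/2) (t^4) hw hw hw'
    have h2 := intg3 (fun x => (x - t^3*σ)^2) (by fun_prop) (-σ) σ (σ/t)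
      ((1-t^4)/2) ((1-t^4)/2) (t^4) hw hw hw'
    rw [h4, h2]
    have e1 : t^4 * (σ/t - t^3*σ)^4 = (σ - t^4*σ)^4 := by
      field_simp
    have e2 : t^4 * (σ/t - t^3*σ)^2 = t^2 * (σ - t^4*σ)^2 := by
      field_simp
    rw [e1, e2]
    have hσ4 : (0:ℝ) < σ^4 := pow_pos hσ 4
    have ht4le : t^4 ≤ 1/4 := by rw [ht4]; exact hη4
    have hkey : (1-t^4)*(1+6*t^6+t^12+(1-t^4)^3) ≤ 8*((1-t^4)*(1+t^2))^2 := by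
      nlinarith [sq_nonneg t, sq_nonneg (t^2), sq_nonneg (t^3), pow_nonneg ht.le 6,
        pow_nonneg ht.le 12, mul_nonneg (pow_nonneg ht.le 2) (pow_nonneg ht.le 4),
        sq_nonneg (1 - t^4), sq_nonneg (1 - t^2)]
    have h := mul_le_mul_of_nonneg_left hkey hσ4.le
    linarith [h]
  · rw [smul_add, smul_smul, smul_smul, ← ENNReal.ofReal_mul (by rw [ht4]; linarith),
      show (1 - t^4) * (1/2) = (1 - t^4)/2 by ring]
  · rw [hm1, hm2]
    rw [sub_zero, abs_of_nonneg (by positivity)]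
end
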